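/- If a closed subset K of ℝⁿ and its complement Kᶜ are both nonempty and convex, then the boundary ∂K is contained in an affine hyperplane. -/

import Mathlib

/-! Since `Kᶜ` is open and convex and disjoint from the convex set `K`, Hahn–Banach gives a
nonzero functional `f` and `c` with `f < c` on `Kᶜ` and `c ≤ f` on `K`. A boundary point lies in
the closures of both sets, so `f = c` there. -/

open scoped RealInnerProductSpace

theorem frontier_subset_setOf_eq_of_le_of_le {X : Type*} [TopologicalSpace X] {f : X → ℝ}
    (hf : Continuous f) {K : Set X} {c : ℝ} (hcompl : ∀ x ∈ Kᶜ, f x ≤ c)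
    (hK : ∀ x ∈ K, c ≤ f x) : frontier K ⊆ {x | f x = c} := by
  intro x hx
  rw [frontier_eq_closure_inter_closure] at hx
  exact le_antisymm (closure_minimal hcompl (isClosed_le hf continuous_const) hx.2)
    (closure_minimal hK (isClosed_le continuous_const hf) hx.1)

theorem exists_strongDual_ne_zero_frontier_subset_of_convex_compl {E : Type*}
    [TopologicalSpace E] [AddCommGroup E] [Module ℝ E] [IsTopologicalAddGroup E]
    [ContinuousSMul ℝ E] {K : Set E} (hKcl : IsClosed K) (hKne : K.Nonempty)
    (hKcne : Kᶜ.Nonempty) (hconv : Convex ℝ K) (hconvc : Convex ℝ Kᶜ) :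
    ∃ (f : StrongDual ℝ E) (c : ℝ), f ≠ 0 ∧ frontier K ⊆ {x | f x = c} := by
  obtain ⟨f, c, hlt, hle⟩ :=
    geometric_hahn_banach_open hconvc hKcl.isOpen_compl hconv disjoint_compl_left
  refine ⟨f, c, ?_, frontier_subset_setOf_eq_of_le_of_le f.continuous
    (fun x hx => (hlt x hx).le) hle⟩
  rintro rfl
  obtain ⟨a, ha⟩ := hKcne
  obtain ⟨b, hb⟩ := hKne
  have h0c : (0 : ℝ) < c := hlt a ha
  have hc0 : c ≤ 0 := hle b hb
  linarith

/-- If a closed set `K ⊆ ℝⁿ` and its complement are both nonempty and convex, then the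
boundary `∂K` is contained in an affine hyperplane `{x : ⟪x, v⟫ = c}` with `v ≠ 0`. -/
theorem stmt_1 (n : ℕ) (K : Set (EuclideanSpace ℝ (Fin n)))
    (hKcl : IsClosed K) (hKne : K.Nonempty) (hKcne : Kᶜ.Nonempty)
    (hconv : Convex ℝ K) (hconvc : Convex ℝ Kᶜ) :
    ∃ (v : EuclideanSpace ℝ (Fin n)) (c : ℝ), v ≠ 0 ∧
      frontier K ⊆ {x | ⟪x, v⟫ = c} := by
  obtain ⟨f, c, hf0, hfront⟩ :=
    exists_strongDual_ne_zero_frontier_subset_of_convex_compl hKcl hKne hKcne hconv hconvc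
  refine ⟨(InnerProductSpace.toDual ℝ _).symm f, c, by simpa using hf0, fun x hx => ?_⟩
  rw [Set.mem_ofPred_eq, real_inner_comm, InnerProductSpace.toDual_symm_apply]
  exact hfront hx
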